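/- Let φ : ℍ → ℍ be an ℝ-algebra homomorphism, let u be a pure quaternion of norm 1, and let a, b be pure quaternions with ‖a‖ = ‖b‖ ≠ 0, ⟨u,a⟩ = 0 and φ(a) ≠ b. Then there exists a nonzero pure quaternion c with ⟨u,c⟩ = 0 and ⟨a,c⟩ = ⟨b,φ(c)⟩, and c is unique up to a real scalar multiple: any pure quaternion c' with ⟨u,c'⟩ = 0 and ⟨a,c'⟩ = ⟨b,φ(c')⟩ is a real scalar multiple of c. (This is the key existence-and-uniqueness step showing that the residue of a point of the geometry Γ is a generalized quadrangle, in the case k = ℝ, 𝔸 = 𝔹 = ℍ.) -/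

import Mathlib

open Quaternion
open scoped RealInnerProductSpace

lemma pure_inner (p q : ℍ[ℝ]) (hq : q.re = 0) : ⟪p, q⟫ = -((p * q).re) := by
  rw [Quaternion.inner_def, Quaternion.star_eq_neg.2 hq, mul_neg, Quaternion.re_neg]

lemma pure_sq (x : ℍ[ℝ]) (hx : x.re = 0) :
    x * x = -((Quaternion.normSq x : ℝ) : ℍ[ℝ]) := by
  have h := x.self_mul_star
  rw [Quaternion.star_eq_neg.2 hx, mul_neg] at h
  exact neg_eq_iff_eq_neg.1 h

lemma pure_anticomm (p q : ℍ[ℝ]) (hp : p.re = 0) (hq : q.re = 0)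
    (h : ⟪p, q⟫ = 0) : q * p = -(p * q) := by
  have h1 : (p * q).re = 0 := by
    rw [pure_inner p q hq] at h; linarith
  have h2 : star (p * q) = -(p * q) := Quaternion.star_eq_neg.2 h1
  rw [star_mul, Quaternion.star_eq_neg.2 hp, Quaternion.star_eq_neg.2 hq, neg_mul_neg] at h2
  exact h2

lemma key_zero (u a z : ℍ[ℝ]) (hu : u.re = 0) (ha : a.re = 0) (hz : z.re = 0)
    (hnu : Quaternion.normSq u = 1) (hna : Quaternion.normSq a ≠ 0)
    (hua : ⟪u, a⟫ = 0) (huz : ⟪u, z⟫ = 0) (haz : ⟪a, z⟫ = 0)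
    (hwz : ⟪u * a, z⟫ = 0) : z = 0 := by
  have au : a * u = -(u * a) := pure_anticomm u a hu ha hua
  have zu : z * u = -(u * z) := pure_anticomm u z hu hz huz
  have za : z * a = -(a * z) := pure_anticomm a z ha hz haz
  set m := u * a * z with hm
  have hmre : m.re = 0 := by
    rw [pure_inner _ z hz] at hwz
    exact neg_eq_zero.1 hwz
  have hmsq := pure_sq m hmre
  have husq := pure_sq u hu
  have hasq := pure_sq a ha
  have hzsq := pure_sq z hz
  have calc1 : m * m = ((Quaternion.normSq a * Quaternion.normSq z : ℝ) : ℍ[ℝ]) := by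
    have : m * m = u * a * (z * u) * a * z := by rw [hm]; noncomm_ring
    rw [zu] at this
    have e2 : u * a * -(u * z) * a * z = -(u * (a * u) * z * a * z) := by noncomm_ring
    rw [this, e2, au]
    have e3 : -(u * -(u * a) * z * a * z) = u * u * a * (z * a) * z := by noncomm_ring
    rw [e3, za]
    have e4 : u * u * a * -(a * z) * z = -(u * u * (a * a) * (z * z)) := by noncomm_ring
    rw [e4, husq, hasq, hzsq, hnu]
    push_cast
    noncomm_ring
  rw [hmsq] at calc1
  have : -Quaternion.normSq m = Quaternion.normSq a * Quaternion.normSq z := by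
    apply Quaternion.coe_injective
    push_cast
    exact_mod_cast calc1
  have hz0 : Quaternion.normSq z = 0 := by
    have h1 := Quaternion.normSq_nonneg (a := m)
    have h2 := Quaternion.normSq_nonneg (a := z)
    have h3 : 0 < Quaternion.normSq a := lt_of_le_of_ne (Quaternion.normSq_nonneg) (Ne.symm hna)
    nlinarith
  exact Quaternion.normSq_eq_zero.1 hz0

lemma sq_eq_neg_coe (q : ℍ[ℝ]) (s : ℝ) (hs : 0 ≤ s)
    (h : q * q = -((s : ℝ) : ℍ[ℝ])) :
    q.re = 0 ∧ Quaternion.normSq q = s := by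
  have hre := congrArg QuaternionAlgebra.re h
  have hi := congrArg QuaternionAlgebra.imI h
  have hj := congrArg QuaternionAlgebra.imJ h
  have hk := congrArg QuaternionAlgebra.imK h
  simp [Quaternion.re_mul, Quaternion.imI_mul, Quaternion.imJ_mul, Quaternion.imK_mul] at hre hi hj hk
  have h0 : q.re = 0 := by
    by_contra hc
    have e1 : q.imI = 0 := by
      have : q.re * q.imI = 0 := by linarith
      exact (mul_eq_zero.1 this).resolve_left hc
    have e2 : q.imJ = 0 := by
      have : q.re * q.imJ = 0 := by linarith
      exact (mul_eq_zero.1 this).resolve_left hc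
    have e3 : q.imK = 0 := by
      have : q.re * q.imK = 0 := by linarith
      exact (mul_eq_zero.1 this).resolve_left hc
    have : 0 < q.re * q.re := mul_self_pos.2 hc
    rw [e1, e2, e3] at hre
    nlinarith
  refine ⟨h0, ?_⟩
  rw [Quaternion.normSq_def']
  rw [h0] at hre ⊢
  nlinarith

lemma phi_pure (φ : ℍ[ℝ] →ₐ[ℝ] ℍ[ℝ]) (x : ℍ[ℝ]) (hx : x.re = 0) :
    (φ x).re = 0 ∧ Quaternion.normSq (φ x) = Quaternion.normSq x := by
  have hsq : φ x * φ x = -((Quaternion.normSq x : ℝ) : ℍ[ℝ]) := by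
    rw [← map_mul, pure_sq x hx, map_neg]
    exact congrArg Neg.neg (φ.commutes _)
  exact sq_eq_neg_coe (φ x) _ (Quaternion.normSq_nonneg) hsq

/-- The key existence-and-uniqueness step showing that the residue of a point
of the geometry `Γ` is a generalized quadrangle (case `k = ℝ`, `𝔸 = 𝔹 = ℍ`):
given an ℝ-algebra homomorphism `φ : ℍ → ℍ`, a pure quaternion `u` of norm 1,
and pure quaternions `a, b` with `‖a‖ = ‖b‖ ≠ 0`, `⟪u, a⟫ = 0` and `φ a ≠ b`,
there is a nonzero pure quaternion `c` with `⟪u, c⟫ = 0` and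
`⟪a, c⟫ = ⟪b, φ c⟫`, unique up to real scalar multiples. -/
theorem residue_quadrangle_step (φ : ℍ[ℝ] →ₐ[ℝ] ℍ[ℝ]) (u a b : ℍ[ℝ])
    (hu : u.re = 0) (hnu : ‖u‖ = 1)
    (ha : a.re = 0) (hb : b.re = 0)
    (hab : ‖a‖ = ‖b‖) (hane : ‖a‖ ≠ 0)
    (hua : ⟪u, a⟫ = 0) (hne : φ a ≠ b) :
    ∃ c : ℍ[ℝ], c ≠ 0 ∧ c.re = 0 ∧ ⟪u, c⟫ = 0 ∧ ⟪a, c⟫ = ⟪b, φ c⟫ ∧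
      ∀ c' : ℍ[ℝ], c'.re = 0 → ⟪u, c'⟫ = 0 → ⟪a, c'⟫ = ⟪b, φ c'⟫ →
        ∃ r : ℝ, c' = r • c := by
  have hnsu : Quaternion.normSq u = 1 := by
    rw [Quaternion.normSq_eq_norm_mul_self, hnu]; ring
  have hnsa : Quaternion.normSq a ≠ 0 := by
    rw [Quaternion.normSq_eq_norm_mul_self]; exact mul_ne_zero hane hane
  have hb0 : ‖b‖ ≠ 0 := by rw [← hab]; exact hane
  obtain ⟨hpa_re, hpa_ns⟩ := phi_pure φ a ha
  have hnorm_phia : ‖φ a‖ = ‖a‖ := by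
    rw [Quaternion.normSq_eq_norm_mul_self, Quaternion.normSq_eq_norm_mul_self] at hpa_ns
    nlinarith [norm_nonneg (φ a), norm_nonneg a]
  -- the linear functional
  set g : ℍ[ℝ] → ℝ := fun c => ⟪a, c⟫ - ⟪b, φ c⟫ with hgdef
  have hga : g a ≠ 0 := by
    intro h0
    apply hne
    have h1 : ⟪b, φ a⟫ = ‖b‖ * ‖φ a‖ := by
      have h2 : ⟪a, a⟫ = ⟪b, φ a⟫ := by
        have := sub_eq_zero.1 h0; simpa [hgdef] using this
      rw [← h2, real_inner_self_eq_norm_mul_norm, hnorm_phia, hab]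
    have h3 := inner_eq_norm_mul_iff_real.1 h1
    rw [hnorm_phia, hab] at h3
    exact (smul_right_injective ℍ[ℝ] hb0 h3).symm
  -- the companion vector w = u * a
  set w : ℍ[ℝ] := u * a with hwdef
  have hau : a * u = -(u * a) := pure_anticomm u a hu ha hua
  have hwre : w.re = 0 := by
    have := pure_inner u a ha; rw [hua] at this
    have := this.symm; rw [neg_eq_zero] at this; exact this
  have hnsw : Quaternion.normSq w = Quaternion.normSq a := by
    rw [hwdef, map_mul, hnsu, one_mul]
  have hw0 : w ≠ 0 := fun h => hnsa (by rw [← hnsw, h, map_zero])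
  have huw : ⟪u, w⟫ = 0 := by
    have h1 : u * w = -a := by
      rw [hwdef, ← mul_assoc, pure_sq u hu, hnsu]
      simp
    rw [pure_inner u w hwre, h1]; simp [ha]
  have haw : ⟪a, w⟫ = 0 := by
    have h1 : a * w = u * ((Quaternion.normSq a : ℝ) : ℍ[ℝ]) := by
      have e1 : a * w = a * u * a := by rw [hwdef, mul_assoc]
      rw [e1, hau]
      have e2 : -(u * a) * a = -(u * (a * a)) := by noncomm_ring
      rw [e2, pure_sq a ha, mul_neg, neg_neg]
    rw [pure_inner a w hwre, h1]
    simp [Quaternion.re_mul, hu]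
  have hwa : ⟪w, a⟫ = 0 := by rw [real_inner_comm]; exact haw
  -- spanning: every pure c' orthogonal to u lies in the span of a and w
  have hspan : ∀ c' : ℍ[ℝ], c'.re = 0 → ⟪u, c'⟫ = 0 →
      (Quaternion.normSq a) • c' = ⟪a, c'⟫ • a + ⟪w, c'⟫ • w := by
    intro c' hc're huc'
    have hz := key_zero u a
      ((Quaternion.normSq a) • c' - ⟪a, c'⟫ • a - ⟪w, c'⟫ • w)
      hu ha (by simp [hc're, ha, hwre]) hnsu hnsa hua
      (by simp [inner_sub_right, real_inner_smul_right, huc', hua, huw])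
      (by rw [inner_sub_right, inner_sub_right, real_inner_smul_right,
            real_inner_smul_right, real_inner_smul_right, Quaternion.inner_self, haw]; ring)
      (by rw [inner_sub_right, inner_sub_right, real_inner_smul_right,
            real_inner_smul_right, real_inner_smul_right, Quaternion.inner_self, hwa, hnsw]; ring)
    have h5 := sub_eq_zero.1 (by rwa [sub_sub] at hz)
    exact h5
  -- linearity of g
  have hglin : ∀ (s t : ℝ) (x y : ℍ[ℝ]), g (s • x + t • y) = s * g x + t * g y := by
    intro s t x y
    simp only [hgdef, inner_add_right, real_inner_smul_right, map_add, map_smul]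
    ring
  refine ⟨g w • a - g a • w, ?_, ?_, ?_, ?_, ?_⟩
  · intro h
    have h1 : ⟪w, g w • a - g a • w⟫ = 0 := by rw [h, inner_zero_right]
    rw [inner_sub_right, real_inner_smul_right, real_inner_smul_right,
      hwa, Quaternion.inner_self, hnsw] at h1
    have : g a * Quaternion.normSq a = 0 := by linarith
    rcases mul_eq_zero.1 this with h' | h'
    · exact hga h'
    · exact hnsa h'
  · simp [ha, hwre]
  · rw [inner_sub_right, real_inner_smul_right, real_inner_smul_right, hua, huw]; ring
  · have h1 := hglin (g w) (-(g a)) a w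
    have h2 : g w • a + (-(g a)) • w = g w • a - g a • w := by
      rw [neg_smul, ← sub_eq_add_neg]
    rw [h2] at h1
    have h3 : g (g w • a - g a • w) = 0 := by rw [h1]; ring
    simpa [hgdef, sub_eq_zero] using h3
  · intro c' hc're huc' hgc'
    have hgc'0 : g c' = 0 := by simp [hgdef, hgc']
    have hsp := hspan c' hc're huc'
    set α := ⟪a, c'⟫ with hα
    set β := ⟪w, c'⟫ with hβ
    -- relation between α and β
    have hrel : α * g a + β * g w = 0 := by
      have := hglin α β a w
      rw [← hsp] at this
      have h4 : g ((Quaternion.normSq a) • c') = Quaternion.normSq a * g c' := by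
        have := hglin (Quaternion.normSq a) 0 c' 0
        simpa using this
      rw [h4, hgc'0, mul_zero] at this
      linarith
    refine ⟨-β / (Quaternion.normSq a * g a), ?_⟩
    apply smul_right_injective ℍ[ℝ] hnsa
    show (Quaternion.normSq a) • c' =
      (Quaternion.normSq a) • ((-β / (Quaternion.normSq a * g a)) • (g w • a - g a • w))
    rw [hsp]
    rw [smul_smul]
    have e : Quaternion.normSq a * (-β / (Quaternion.normSq a * g a)) = -β / g a := by
      field_simp
    rw [e, smul_sub, smul_smul, smul_smul]
    have e1 : -β / g a * g w = α := by
      field_simp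
      linarith
    have e2 : -β / g a * g a = -β := by field_simp
    rw [e1, e2, neg_smul, sub_neg_eq_add]
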